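/- Let ε ∈ ℝ and let Φ_{1,ε} be the rational map Φ_{1,ε}(x,y) = ( (−2εx² + (1−ε²)x − 2εy² − 2εy)/D₁(x,y), (−2ε²x² + 2εx − 2ε²y² + (1−ε²)y)/D₁(x,y) ), D₁(x,y) = 4ε²x² + 4ε²y² + 4ε²y + ε² − 4εx + 1. Then Φ_{1,ε} preserves the measure with density ν(x,y) = 1/(1+2y)² with respect to Lebesgue measure: for every (x,y) with D₁(x,y) ≠ 0, 1 + 2y ≠ 0, and the second component of Φ_{1,ε}(x,y) different from −1/2, one has ν(Φ_{1,ε}(x,y)) · |det JΦ_{1,ε}(x,y)| = ν(x,y), where JΦ_{1,ε} is the Jacobian matrix of Φ_{1,ε}. -/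

import Mathlib

/-!
`Φ_{1,ε} = (N₁/D, N₂/D)` where `N₁`, `N₂` and `D = D₁` are all of the form
`a (x² + y²) + b x + c y + e`. For such quotients the Jacobian determinant is a cubic
expression in `D`, `N₁`, `N₂` and their gradients over `D³`; here it collapses to
`(1 + ε²)² / D²`. Since also `1 + 2 Φ₂ = (1 + ε²)(1 + 2y) / D`, the factor `(1 + ε²)² / D²`
of `|det JΦ|` cancels exactly against `ν ∘ Φ`.
-/

/-- Denominator of the Kahan–Hirota–Kimura map `Φ_{1,ε}` of the isochronous
quadratic system `S₁`: `ẋ = -y + x² - y²`, `ẏ = x(1+2y)`. -/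
noncomputable def D1 (ε x y : ℝ) : ℝ :=
  4 * ε ^ 2 * x ^ 2 + 4 * ε ^ 2 * y ^ 2 + 4 * ε ^ 2 * y + ε ^ 2 - 4 * ε * x + 1

/-- The Kahan–Hirota–Kimura map `Φ_{1,ε}` of the isochronous quadratic system `S₁`. -/
noncomputable def Phi1 (ε : ℝ) (q : ℝ × ℝ) : ℝ × ℝ :=
  ((-2 * ε * q.1 ^ 2 + (1 - ε ^ 2) * q.1 - 2 * ε * q.2 ^ 2 - 2 * ε * q.2) / D1 ε q.1 q.2,
   (-2 * ε ^ 2 * q.1 ^ 2 + 2 * ε * q.1 - 2 * ε ^ 2 * q.2 ^ 2 + (1 - ε ^ 2) * q.2) /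
      D1 ε q.1 q.2)

/-- The invariant density `ν(x,y) = 1/(1+2y)²`. -/
noncomputable def nu1 (q : ℝ × ℝ) : ℝ := 1 / (1 + 2 * q.2) ^ 2

theorem LinearMap.det_prod_self {R : Type*} [CommRing R] (f : R × R →ₗ[R] R × R) :
    f.det = (f (1, 0)).1 * (f (0, 1)).2 - (f (0, 1)).1 * (f (1, 0)).2 := by
  rw [← LinearMap.det_toMatrix (Module.Basis.finTwoProd R), Matrix.det_fin_two]
  simp [LinearMap.toMatrix_apply]

section Quotient

variable {𝕜 : Type*} [NontriviallyNormedField 𝕜]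

/-- The rows of the Jacobian are `(D ∇Nᵢ - Nᵢ ∇D) / D²`; expanding the determinant, the term
`N₁ N₂ (∇D ∧ ∇D)` vanishes and one factor `D` cancels. -/
theorem det_fderiv_prodMk_div {n₁ n₂ d : 𝕜 × 𝕜 → 𝕜} {n₁' n₂' d' : 𝕜 × 𝕜 →L[𝕜] 𝕜}
    {p : 𝕜 × 𝕜} (h₁ : HasFDerivAt n₁ n₁' p) (h₂ : HasFDerivAt n₂ n₂' p)
    (hd : HasFDerivAt d d' p) (hp : d p ≠ 0) :
    (fderiv 𝕜 (fun q => (n₁ q / d q, n₂ q / d q)) p).det =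
      (d p * (n₁' (1, 0) * n₂' (0, 1) - n₁' (0, 1) * n₂' (1, 0))
        - n₂ p * (n₁' (1, 0) * d' (0, 1) - n₁' (0, 1) * d' (1, 0))
        - n₁ p * (d' (1, 0) * n₂' (0, 1) - d' (0, 1) * n₂' (1, 0))) / d p ^ 3 := by
  have hinv := (hasFDerivAt_inv hp).comp p hd
  have hF := ((h₁.mul hinv).prodMk (h₂.mul hinv)).congr_of_eventuallyEq
    (.of_forall fun q => by simp [div_eq_mul_inv] : (fun q => (n₁ q / d q, n₂ q / d q)) =ᶠ[_] _)
  rw [hF.fderiv, ContinuousLinearMap.det, LinearMap.det_prod_self]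
  simp only [Function.comp_apply, ContinuousLinearMap.coe_prod,
    ContinuousLinearMap.toLinearMap_add, ContinuousLinearMap.toLinearMap_smul,
    ContinuousLinearMap.toLinearMap_comp, ContinuousLinearMap.toLinearMap_toSpanSingleton,
    LinearMap.prod_apply, Function.prod_apply, LinearMap.add_apply, LinearMap.smul_apply,
    LinearMap.coe_comp, ContinuousLinearMap.coe_coe, LinearMap.toSpanSingleton_apply,
    smul_eq_mul, mul_neg]
  field_simp
  ring

def circleQuadratic (a b c e : 𝕜) (q : 𝕜 × 𝕜) : 𝕜 :=
  a * (q.1 ^ 2 + q.2 ^ 2) + b * q.1 + c * q.2 + e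

theorem hasFDerivAt_circleQuadratic (a b c e : 𝕜) (p : 𝕜 × 𝕜) :
    HasFDerivAt (circleQuadratic a b c e)
      ((2 * a * p.1 + b) • ContinuousLinearMap.fst 𝕜 𝕜 𝕜 +
        (2 * a * p.2 + c) • ContinuousLinearMap.snd 𝕜 𝕜 𝕜) p := by
  have hx : HasFDerivAt (fun q : 𝕜 × 𝕜 => q.1) (ContinuousLinearMap.fst 𝕜 𝕜 𝕜) p :=
    hasFDerivAt_fst
  have hy : HasFDerivAt (fun q : 𝕜 × 𝕜 => q.2) (ContinuousLinearMap.snd 𝕜 𝕜 𝕜) p :=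
    hasFDerivAt_snd
  refine ((((((hx.pow 2).add (hy.pow 2)).const_mul a).add (hx.const_mul b)).add
    (hy.const_mul c)).add_const e).congr_fderiv ?_
  ext <;>
  simp only [Nat.add_one_sub_one, pow_one, nsmul_eq_mul, Nat.cast_ofNat, smul_add,
    ContinuousLinearMap.add_comp, ContinuousLinearMap.smul_comp, ContinuousLinearMap.fst_comp_inl,
    ContinuousLinearMap.snd_comp_inl, ContinuousLinearMap.fst_comp_inr,
    ContinuousLinearMap.snd_comp_inr, smul_zero, zero_add, add_zero,
    add_apply, smul_apply, ContinuousLinearMap.id_apply,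
    smul_eq_mul, mul_one] <;>
  ring

end Quotient

theorem Phi1_eq_div_circleQuadratic (ε : ℝ) : Phi1 ε = fun q =>
    (circleQuadratic (-2 * ε) (1 - ε ^ 2) (-2 * ε) 0 q /
        circleQuadratic (4 * ε ^ 2) (-4 * ε) (4 * ε ^ 2) (ε ^ 2 + 1) q,
      circleQuadratic (-2 * ε ^ 2) (2 * ε) (1 - ε ^ 2) 0 q /
        circleQuadratic (4 * ε ^ 2) (-4 * ε) (4 * ε ^ 2) (ε ^ 2 + 1) q) := by
  funext q
  simp only [Phi1, D1, circleQuadratic]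
  congr 1 <;> congr 1 <;> ring

theorem D1_eq_circleQuadratic (ε x y : ℝ) :
    D1 ε x y = circleQuadratic (4 * ε ^ 2) (-4 * ε) (4 * ε ^ 2) (ε ^ 2 + 1) (x, y) := by
  simp only [D1, circleQuadratic]
  ring

theorem det_fderiv_Phi1 {ε x y : ℝ} (hD : D1 ε x y ≠ 0) :
    (fderiv ℝ (Phi1 ε) (x, y)).det = (1 + ε ^ 2) ^ 2 / D1 ε x y ^ 2 := by
  rw [D1_eq_circleQuadratic] at hD ⊢
  rw [Phi1_eq_div_circleQuadratic, det_fderiv_prodMk_div (hasFDerivAt_circleQuadratic _ _ _ _ _)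
    (hasFDerivAt_circleQuadratic _ _ _ _ _) (hasFDerivAt_circleQuadratic _ _ _ _ _) hD,
    div_eq_div_iff (pow_ne_zero 3 hD) (pow_ne_zero 2 hD)]
  simp only [add_apply, smul_apply,
    ContinuousLinearMap.coe_fst', ContinuousLinearMap.coe_snd', smul_eq_mul, circleQuadratic]
  ring

theorem one_add_two_mul_Phi1_snd {ε x y : ℝ} (hD : D1 ε x y ≠ 0) :
    1 + 2 * (Phi1 ε (x, y)).2 = (1 + ε ^ 2) * (1 + 2 * y) / D1 ε x y := by
  rw [eq_div_iff hD]
  simp only [Phi1]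
  field_simp
  simp only [D1]
  ring

theorem stmt_12_general (ε x y : ℝ) (hD : D1 ε x y ≠ 0) :
    nu1 (Phi1 ε (x, y)) * |(fderiv ℝ (Phi1 ε) (x, y)).det| = nu1 (x, y) := by
  have hε : 1 + ε ^ 2 ≠ 0 := by positivity
  rw [det_fderiv_Phi1 hD, abs_of_nonneg (by positivity), nu1, one_add_two_mul_Phi1_snd hD, nu1]
  field_simp

/-- `Φ_{1,ε}` preserves the measure with density `ν(x,y) = 1/(1+2y)²` with respect to
the Lebesgue measure: `ν(Φ_{1,ε}(x,y))·|det JΦ_{1,ε}(x,y)| = ν(x,y)` wherever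
everything is defined. -/
theorem stmt_12 (ε x y : ℝ) (hD : D1 ε x y ≠ 0) (hy : 1 + 2 * y ≠ 0)
    (h2 : (Phi1 ε (x, y)).2 ≠ -1 / 2) :
    nu1 (Phi1 ε (x, y)) * |(fderiv ℝ (Phi1 ε) (x, y)).det| = nu1 (x, y) :=
  stmt_12_general ε x y hD
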